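/- Suppose a ∈ K^× is not contained in any proper subfield of K, and F contains no m-th root of unity other than 1. Then Aut_F(A) = {G_c : c ∈ K^×}, this group is isomorphic to the kernel of N_{K/F} : K^× → F^×, and every F-automorphism of A = (K/F,σ,a) is inner. -/

import Mathlib

/-! An automorphism `H` preserves the left nucleus of `A`, which is `K t^0` because `a` is moved
by every nontrivial power of `σ`; so `H` restricts to some `τ ∈ Gal(K/F)` there. The relation
`t x = σ(x) t` then forces `H(t) = k t`, whence `H = H_{τ,k}`, and applying `H` to
`t^{m-1} t = a` gives `τ(a) = N(k) a`. Since `τ^m = 1`, `N(k) ∈ F` is an `m`-th root of unity,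
so `N(k) = 1`, `τ` fixes `a` and therefore `τ = id`. Hilbert 90 writes `k = σ(c)/c`, i.e.
`H = G_c`, and `G_c(z) = (c⁻¹ z) c` is inner. -/

open Finset

/-- The unit element `t^0` of the nonassociative cyclic algebra, in coordinates. -/
def cycOne (K : Type*) [Zero K] [One K] (m : ℕ) : Fin m → K :=
  fun k => if (k : ℕ) = 0 then 1 else 0

/-- The embedding `x ↦ x t^0` of `K` into the nonassociative cyclic algebra. -/
def cycEmb (K : Type*) [Zero K] (m : ℕ) (x : K) : Fin m → K :=
  fun i => if (i : ℕ) = 0 then x else 0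

section

variable {F K : Type*} [Field F] [Field K] [Algebra F K]

/-- Coordinates of the product in the nonassociative cyclic algebra `(K/F, σ, a)`:
`(x t^i) ∘ (y t^j) = x σ^i(y) t^{i+j}` if `i+j < m` and
`(x t^i) ∘ (y t^j) = x σ^i(y) σ^{i+j-m}(a) t^{i+j-m}` if `i+j ≥ m`. -/
def cycMul (m : ℕ) (σ : K ≃ₐ[F] K) (a : K) (u v : Fin m → K) : Fin m → K :=
  fun k =>
    (∑ i : Fin m, ∑ j : Fin m,
        if (i : ℕ) + (j : ℕ) = (k : ℕ) then u i * (σ ^ (i : ℕ)) (v j) else 0) +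
      ∑ i : Fin m, ∑ j : Fin m,
        if (i : ℕ) + (j : ℕ) = (k : ℕ) + m then
          u i * (σ ^ (i : ℕ)) (v j) * (σ ^ (k : ℕ)) a
        else 0

/-- The field norm `N_{K/F}(k) = ∏_{l=0}^{m-1} σ^l(k)`. -/
def cycNorm (m : ℕ) (σ : K ≃ₐ[F] K) (k : K) : K :=
  ∏ l ∈ Finset.range m, (σ ^ l) k

/-- The map `H_{τ,k} : x t^i ↦ τ(x) (∏_{l=0}^{i-1} σ^l(k)) t^i`. -/
def cycH (m : ℕ) (σ τ : K ≃ₐ[F] K) (k : K) (u : Fin m → K) : Fin m → K :=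
  fun i => τ (u i) * ∏ l ∈ Finset.range (i : ℕ), (σ ^ l) k

/-- The map `G_c : x t^i ↦ x c⁻¹ σ^i(c) t^i`. -/
def cycG (m : ℕ) (σ : K ≃ₐ[F] K) (c : K) (u : Fin m → K) : Fin m → K :=
  fun i => u i * c⁻¹ * (σ ^ (i : ℕ)) c

/-- `H` is an `F`-automorphism of the nonassociative cyclic algebra `(K/F, σ, a)`. -/
def IsCycAut (m : ℕ) (σ : K ≃ₐ[F] K) (a : K) (H : (Fin m → K) → (Fin m → K)) : Prop :=
  Function.Bijective H ∧
    (∀ u v, H (u + v) = H u + H v) ∧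
    (∀ (c : F) (u : Fin m → K), H (c • u) = c • H u) ∧
    H (cycOne K m) = cycOne K m ∧
    ∀ u v, H (cycMul m σ a u v) = cycMul m σ a (H u) (H v)

/-- `H` is an inner `F`-automorphism of `(K/F, σ, a)`:
`H(z) = (w_l ∘ z) ∘ w` for some `w ≠ 0` with left inverse `w_l`. -/
def IsCycInner (m : ℕ) (σ : K ≃ₐ[F] K) (a : K) (H : (Fin m → K) → (Fin m → K)) : Prop :=
  ∃ w wl : Fin m → K, w ≠ 0 ∧ cycMul m σ a wl w = cycOne K m ∧
    ∀ z, H z = cycMul m σ a (cycMul m σ a wl z) w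

end

section Monomial

variable {M : Type*} {m n : ℕ}

lemma sum_ite_val_add_eq [AddCommMonoid M] (f : Fin m → M) (q n : ℕ) :
    (∑ i : Fin m, if (i : ℕ) + q = n then f i else 0) =
      if h : q ≤ n ∧ n - q < m then f ⟨n - q, h.2⟩ else 0 := by
  split_ifs with h
  · rw [Fintype.sum_eq_single ⟨n - q, h.2⟩ fun i hi =>
      if_neg fun h' => hi (by ext; simp; omega)]
    simp only [show n - q + q = n by omega, if_true]
  · exact Finset.sum_eq_zero fun i _ => if_neg (by omega)

/-- The monomial `x t^n`; it is the zero vector when `n ≥ m`. -/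
def cycMonomial [Zero M] (m n : ℕ) (x : M) : Fin m → M :=
  fun j => if (j : ℕ) = n then x else 0

@[simp]
lemma cycMonomial_self [Zero M] (h : n < m) (x : M) : cycMonomial m n x ⟨n, h⟩ = x :=
  if_pos rfl

@[simp]
lemma cycMonomial_zero [Zero M] : cycMonomial m n (0 : M) = 0 := by
  funext j; simp [cycMonomial]

lemma cycOne_eq_cycMonomial [Zero M] [One M] : cycOne M m = cycMonomial m 0 1 := rfl

lemma cycMonomial_ne_zero [Zero M] (h : n < m) {x : M} (hx : x ≠ 0) : cycMonomial m n x ≠ 0 :=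
  fun h0 => hx (by simpa using congrFun h0 ⟨n, h⟩)

lemma eq_cycMonomial_of_forall_ne [Zero M] (h : n < m) {u : Fin m → M}
    (hu : ∀ j : Fin m, (j : ℕ) ≠ n → u j = 0) : u = cycMonomial m n (u ⟨n, h⟩) := by
  funext j
  by_cases hj : (j : ℕ) = n
  · simp [cycMonomial, show j = ⟨n, h⟩ from Fin.ext hj]
  · simp [cycMonomial, hj, hu j hj]

lemma cycMonomial_add [AddZeroClass M] (x y : M) :
    cycMonomial m n (x + y) = cycMonomial m n x + cycMonomial m n y := by
  funext j; by_cases h : (j : ℕ) = n <;> simp [cycMonomial, h]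

lemma cycMonomial_smul {R : Type*} [Zero M] [SMulZeroClass R M] (r : R) (x : M) :
    cycMonomial m n (r • x) = r • cycMonomial m n x := by
  funext j; by_cases h : (j : ℕ) = n <;> simp [cycMonomial, h]

lemma sum_cycMonomial [AddCommMonoid M] (u : Fin m → M) :
    ∑ p : Fin m, cycMonomial m p (u p) = u := by
  funext j
  rw [Finset.sum_apply, Fintype.sum_eq_single j fun p hp => ?_]
  · exact if_pos rfl
  · exact if_neg fun h => hp (Fin.ext h).symm

end Monomial

section Mul

variable {F K : Type*} [Field F] [Field K] [Algebra F K] {m : ℕ} {σ : K ≃ₐ[F] K} {a : K}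

lemma cycMul_cycMonomial_apply (u : Fin m → K) {q : ℕ} (hq : q < m) (y : K) (k : Fin m) :
    cycMul m σ a u (cycMonomial m q y) k =
      if h : q ≤ k then u ⟨k - q, by omega⟩ * (σ ^ (k - q : ℕ)) y
      else u ⟨k + m - q, by omega⟩ * (σ ^ (k + m - q)) y * (σ ^ (k : ℕ)) a := by
  have collapse : ∀ (c : ℕ) (g : Fin m → K → K), (∀ i, g i 0 = 0) →
      (∑ i : Fin m, ∑ j : Fin m,
        if (i : ℕ) + j = c then g i (if (j : ℕ) = q then y else 0) else 0) =
        ∑ i : Fin m, if (i : ℕ) + q = c then g i y else 0 := by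
    refine fun c g hg => Finset.sum_congr rfl fun i _ => ?_
    rw [Fintype.sum_eq_single ⟨q, hq⟩ fun j hj => ?_]
    · simp
    · simp [hg, show (j : ℕ) ≠ q from fun h => hj (Fin.ext h)]
  simp only [cycMul, cycMonomial]
  rw [collapse k (fun i v => u i * (σ ^ (i : ℕ)) v) (by simp),
    collapse (k + m) (fun i v => u i * (σ ^ (i : ℕ)) v * (σ ^ (k : ℕ)) a) (by simp),
    sum_ite_val_add_eq, sum_ite_val_add_eq]
  by_cases h : q ≤ k
  · rw [dif_pos ⟨h, by omega⟩, dif_neg (by omega), dif_pos h, add_zero]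
  · rw [dif_neg (by omega), dif_pos ⟨by omega, by omega⟩, dif_neg h, zero_add]

lemma cycMul_cycMonomial_cycMonomial {p q : ℕ} (hp : p < m) (hq : q < m) (x y : K) :
    cycMul m σ a (cycMonomial m p x) (cycMonomial m q y) =
      if p + q < m then cycMonomial m (p + q) (x * (σ ^ p) y)
      else cycMonomial m (p + q - m) (x * (σ ^ p) y * (σ ^ (p + q - m)) a) := by
  funext k
  rw [cycMul_cycMonomial_apply _ hq, apply_ite (fun u : Fin m → K => u k)]
  simp only [cycMonomial]
  split_ifs <;> first | omega | simp only [zero_mul] | congr 4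

lemma cycMul_add_right (u v v' : Fin m → K) :
    cycMul m σ a u (v + v') = cycMul m σ a u v + cycMul m σ a u v' := by
  funext k
  simp only [cycMul, Pi.add_apply, map_add, mul_add, add_mul, ite_add_zero,
    Finset.sum_add_distrib]
  ring

lemma cycMul_smul_left (x : K) (u v : Fin m → K) :
    cycMul m σ a (x • u) v = x • cycMul m σ a u v := by
  funext k
  simp only [cycMul, Pi.smul_apply, smul_eq_mul, mul_add, Finset.mul_sum, mul_ite,
    mul_zero, mul_assoc]

lemma cycMul_sum_right {ι : Type*} (s : Finset ι) (u : Fin m → K) (f : ι → Fin m → K) :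
    cycMul m σ a u (∑ i ∈ s, f i) = ∑ i ∈ s, cycMul m σ a u (f i) :=
  map_sum (AddMonoidHom.mk' (cycMul m σ a u) (cycMul_add_right u)) f s

lemma cycMul_cycMonomial_zero_right (hm : 0 < m) (u : Fin m → K) (x : K) :
    cycMul m σ a u (cycMonomial m 0 x) = fun k => u k * (σ ^ (k : ℕ)) x := by
  funext k
  simp [cycMul_cycMonomial_apply u hm]

lemma cycMul_cycMonomial_zero_left (hm : 0 < m) (x : K) (u : Fin m → K) :
    cycMul m σ a (cycMonomial m 0 x) u = x • u := by
  conv_lhs => rw [← sum_cycMonomial u]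
  rw [cycMul_sum_right]
  conv_rhs => rw [← sum_cycMonomial (x • u)]
  refine Finset.sum_congr rfl fun q _ => ?_
  rw [cycMul_cycMonomial_cycMonomial hm q.isLt, if_pos (by simp)]
  simp

end Mul

section Nucleus

variable {F K : Type*} [Field F] [Field K] [Algebra F K] {m : ℕ} {σ : K ≃ₐ[F] K} {a : K}

def IsLeftNuclear (m : ℕ) (σ : K ≃ₐ[F] K) (a : K) (z : Fin m → K) : Prop :=
  ∀ u v, cycMul m σ a (cycMul m σ a z u) v = cycMul m σ a z (cycMul m σ a u v)

lemma isLeftNuclear_cycMonomial_zero (hm : 0 < m) (x : K) :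
    IsLeftNuclear m σ a (cycMonomial m 0 x) := fun u v => by
  rw [cycMul_cycMonomial_zero_left hm, cycMul_cycMonomial_zero_left hm, cycMul_smul_left]

lemma IsLeftNuclear.apply_eq_zero (ha : ∀ i, 0 < i → i < m → (σ ^ i) a ≠ a)
    {z : Fin m → K} (hz : IsLeftNuclear m σ a z) {i : Fin m} (hi : (i : ℕ) ≠ 0) :
    z i = 0 := by
  have hm : 0 < m := i.pos
  -- `t^(m-i) ∘ t^i = a`; the two bracketings of `z ∘ t^(m-i) ∘ t^i` pick up `a` and `σ^i a`
  have hprod : cycMul m σ a (cycMonomial m (m - i) 1) (cycMonomial m i 1) = cycMonomial m 0 a := by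
    rw [cycMul_cycMonomial_cycMonomial (by omega) i.isLt, if_neg (by omega),
      show m - i + i - m = 0 by omega]
    simp
  have hleft : cycMul m σ a (cycMul m σ a z (cycMonomial m (m - i) 1)) (cycMonomial m i 1) i =
      z i * a := by
    rw [cycMul_cycMonomial_apply _ i.isLt, dif_pos le_rfl, cycMul_cycMonomial_apply _ (by omega),
      dif_neg (by simp; omega)]
    simp [show m - (m - i) = i by omega]
  have hright : cycMul m σ a z (cycMul m σ a (cycMonomial m (m - i) 1) (cycMonomial m i 1)) i =
      z i * (σ ^ (i : ℕ)) a := by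
    rw [hprod, cycMul_cycMonomial_zero_right hm]
  by_contra hzi
  exact ha i (by omega) i.isLt
    (mul_left_cancel₀ hzi (hright.symm.trans ((congrFun (hz _ _) i).symm.trans hleft)))

lemma IsLeftNuclear.eq_cycMonomial_zero (hm : 0 < m)
    (ha : ∀ i, 0 < i → i < m → (σ ^ i) a ≠ a) {z : Fin m → K}
    (hz : IsLeftNuclear m σ a z) : z = cycMonomial m 0 (z ⟨0, hm⟩) :=
  eq_cycMonomial_of_forall_ne hm fun _ hj => hz.apply_eq_zero ha hj

end Nucleus

section Maps

variable {F K : Type*} [Field F] [Field K] [Algebra F K] {m : ℕ} {σ : K ≃ₐ[F] K} {a : K}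

lemma cycH_cycMonomial (τ : K ≃ₐ[F] K) (k : K) (n : ℕ) (x : K) :
    cycH m σ τ k (cycMonomial m n x) =
      cycMonomial m n (τ x * ∏ l ∈ Finset.range n, (σ ^ l) k) := by
  funext j
  by_cases h : (j : ℕ) = n <;> simp [cycH, cycMonomial, h]

lemma cycH_one_injective (hm : 1 < m) : Function.Injective (cycH m σ 1) := fun k k' h => by
  simpa [cycH] using congrFun (congrFun h 1) ⟨1, hm⟩

lemma cycH_one_mul (k k' : K) : cycH m σ 1 (k * k') = cycH m σ 1 k ∘ cycH m σ 1 k' := by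
  funext u i
  simp only [cycH, Function.comp_apply, AlgEquiv.one_apply, map_mul, Finset.prod_mul_distrib]
  ring

lemma prod_range_pow_apply_div_self {c : K} (hc : c ≠ 0) (n : ℕ) :
    ∏ l ∈ Finset.range n, (σ ^ l) (σ c / c) = (σ ^ n) c / c := by
  induction n with
  | zero => simp [hc]
  | succ n ih =>
    have : (σ ^ n) c ≠ 0 := (map_ne_zero _).mpr hc
    rw [Finset.prod_range_succ, ih, map_div₀, pow_succ, AlgEquiv.mul_apply]
    field_simp

lemma cycNorm_div_self (hσm : σ ^ m = 1) {c : K} (hc : c ≠ 0) :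
    cycNorm m σ (σ c / c) = 1 := by
  rw [cycNorm, prod_range_pow_apply_div_self hc, hσm, AlgEquiv.one_apply, div_self hc]

lemma cycH_one_div_self {c : K} (hc : c ≠ 0) : cycH m σ 1 (σ c / c) = cycG m σ c := by
  funext u i
  simp only [cycH, cycG, AlgEquiv.one_apply, prod_range_pow_apply_div_self hc]
  ring

lemma cycG_cycG (c d : K) (u : Fin m → K) :
    cycG m σ c (cycG m σ d u) = cycG m σ (c * d) u := by
  funext i
  simp only [cycG, map_mul, mul_inv]
  ring

lemma cycG_one (u : Fin m → K) : cycG m σ 1 u = u := by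
  funext i
  simp [cycG]

lemma cycG_cycMul (hσm : σ ^ m = 1) {c : K} (hc : c ≠ 0) (u v : Fin m → K) :
    cycG m σ c (cycMul m σ a u v) = cycMul m σ a (cycG m σ c u) (cycG m σ c v) := by
  funext k
  simp only [cycG, cycMul, add_mul, Finset.sum_mul, ite_mul, zero_mul]
  congr 1 <;> refine Finset.sum_congr rfl fun i _ => Finset.sum_congr rfl fun j _ => ?_ <;>
    split_ifs with h <;> try rfl
  all_goals
    have : (σ ^ (i : ℕ)) c ≠ 0 := (map_ne_zero _).mpr hc
    rw [map_mul, map_mul, map_inv₀, ← AlgEquiv.mul_apply, ← pow_add, h]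
  · field_simp
  · rw [pow_add, hσm, mul_one]
    field_simp

lemma isCycAut_cycG (hσm : σ ^ m = 1) {c : K} (hc : c ≠ 0) : IsCycAut m σ a (cycG m σ c) := by
  refine ⟨?_, fun u v => ?_, fun r u => ?_, ?_, cycG_cycMul hσm hc⟩
  · refine Function.bijective_iff_has_inverse.mpr ⟨cycG m σ c⁻¹, fun u => ?_, fun u => ?_⟩
    · rw [cycG_cycG, inv_mul_cancel₀ hc, cycG_one]
    · rw [cycG_cycG, mul_inv_cancel₀ hc, cycG_one]
  · funext i
    simp [cycG, add_mul]
  · funext i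
    simp [cycG]
  · funext i
    by_cases h : (i : ℕ) = 0 <;> simp [cycOne, cycG, h, hc]

lemma isCycInner_cycG (hm : 0 < m) {c : K} (hc : c ≠ 0) : IsCycInner m σ a (cycG m σ c) := by
  refine ⟨cycMonomial m 0 c, cycMonomial m 0 c⁻¹, cycMonomial_ne_zero hm hc, ?_, fun z => ?_⟩
  · rw [cycMul_cycMonomial_cycMonomial hm hm, if_pos hm]
    simp [cycOne_eq_cycMonomial, hc]
  · rw [cycMul_cycMonomial_zero_left hm, cycMul_cycMonomial_zero_right hm]
    funext i
    simp only [cycG, Pi.smul_apply, smul_eq_mul]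
    ring

lemma apply_eq_cycNorm_mul_of_cycH_cycMul (hm : 1 < m) {τ : K ≃ₐ[F] K} {k : K}
    (hmul : ∀ u v, cycH m σ τ k (cycMul m σ a u v) =
      cycMul m σ a (cycH m σ τ k u) (cycH m σ τ k v)) :
    τ a = cycNorm m σ k * a := by
  -- evaluate at `t^(m-1) ∘ t = a`
  have h := congrFun (hmul (cycMonomial m (m - 1) 1) (cycMonomial m 1 1)) ⟨0, by omega⟩
  rw [cycMul_cycMonomial_cycMonomial (by omega) hm, if_neg (by omega), cycH_cycMonomial,
    cycH_cycMonomial, cycH_cycMonomial, cycMul_cycMonomial_cycMonomial (by omega) hm,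
    if_neg (by omega), show m - 1 + 1 - m = 0 by omega] at h
  rw [cycNorm, ← Nat.sub_add_cancel hm.le, Finset.prod_range_succ]
  simpa using h

end Maps

section Galois

variable {F K : Type*} [Field F] [Field K] [Algebra F K] {m : ℕ} {σ : K ≃ₐ[F] K} {a : K}

lemma eq_one_of_apply_eq_self (hsub : ∀ L : Subfield K, a ∈ L → L = ⊤) {τ : K ≃ₐ[F] K}
    (h : τ a = a) : τ = 1 := by
  have htop := hsub ((τ : K →+* K).eqLocusField (RingHom.id K)) h
  exact AlgEquiv.ext fun x => (htop ▸ Subfield.mem_top x : x ∈ _)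

lemma pow_apply_ne_self (hsub : ∀ L : Subfield K, a ∈ L → L = ⊤) (horder : orderOf σ = m)
    {i : ℕ} (hi : 0 < i) (him : i < m) : (σ ^ i) a ≠ a := fun h =>
  pow_ne_one_of_lt_orderOf hi.ne' (horder ▸ him) (eq_one_of_apply_eq_self hsub h)

lemma eq_one_of_apply_eq_smul {τ : K ≃ₐ[F] K} (hτ : τ ^ m = 1) (ha0 : a ≠ 0)
    (hroot : ∀ x : F, x ^ m = 1 → x = 1) {r : F} (h : τ a = r • a) : r = 1 := by
  have hpow : ∀ j : ℕ, (τ ^ j) a = r ^ j • a := by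
    intro j
    induction j with
    | zero => simp
    | succ j ih => rw [pow_succ, AlgEquiv.mul_apply, h, map_smul, ih, smul_smul, ← pow_succ']
  refine hroot r (smul_left_injective F ha0 ?_)
  simp only [← hpow, hτ, AlgEquiv.one_apply, one_smul]

lemma cycNorm_eq_algebraMap_norm [IsGalois F K] [FiniteDimensional F K]
    (hgen : ∀ τ : K ≃ₐ[F] K, τ ∈ Subgroup.zpowers σ) (horder : orderOf σ = m) (k : K) :
    cycNorm m σ k = algebraMap F K (Algebra.norm F k) := by
  classical
  rw [Algebra.norm_eq_prod_automorphisms, cycNorm, ← horder]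
  refine Finset.prod_nbij (σ ^ ·) (fun _ _ => Finset.mem_univ _)
    (pow_injOn_Iio_orderOf.mono fun _ h => by simpa using h) (fun τ _ => ?_) fun _ _ => rfl
  obtain ⟨l, hl, rfl⟩ := Finset.mem_image.mp
    ((isOfFinOrder_of_finite σ).mem_zpowers_iff_mem_range_orderOf.mp (hgen τ))
  exact ⟨l, hl, rfl⟩

lemma prod_range_pow_apply_add (k : K) (p q : ℕ) :
    ∏ l ∈ Finset.range (p + q), (σ ^ l) k =
      (∏ l ∈ Finset.range p, (σ ^ l) k) * (σ ^ p) (∏ l ∈ Finset.range q, (σ ^ l) k) := by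
  rw [Finset.prod_range_add, map_prod]
  congr 1
  exact Finset.prod_congr rfl fun l _ => by rw [pow_add, AlgEquiv.mul_apply]

lemma prod_range_pow_apply_add_mul {k : K} (hk : cycNorm m σ k = 1) (r j : ℕ) :
    ∏ l ∈ Finset.range (r + m * j), (σ ^ l) k = ∏ l ∈ Finset.range r, (σ ^ l) k := by
  rw [cycNorm] at hk
  induction j with
  | zero => simp
  | succ j ih =>
    rw [mul_add_one, ← add_assoc, prod_range_pow_apply_add, ih, hk, map_one, mul_one]

lemma prod_range_pow_apply_eq_of_pow_eq (horder : orderOf σ = m) {k : K}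
    (hk : cycNorm m σ k = 1) {p q : ℕ} (h : σ ^ p = σ ^ q) :
    ∏ l ∈ Finset.range p, (σ ^ l) k = ∏ l ∈ Finset.range q, (σ ^ l) k := by
  have hpq : p % m = q % m := horder ▸ pow_eq_pow_iff_modEq.mp h
  rw [← Nat.mod_add_div p m, ← Nat.mod_add_div q m, prod_range_pow_apply_add_mul hk,
    prod_range_pow_apply_add_mul hk, hpq]

lemma exists_div_self_eq_of_cycNorm_eq_one [FiniteDimensional F K]
    (hgen : ∀ τ : K ≃ₐ[F] K, τ ∈ Subgroup.zpowers σ) (horder : orderOf σ = m) {k : K}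
    (hk0 : k ≠ 0) (hk : cycNorm m σ k = 1) : ∃ c : K, c ≠ 0 ∧ σ c / c = k := by
  -- Noether's form of Hilbert 90, applied to the cocycle `σ^n ↦ k σ(k) ⋯ σ^(n-1)(k)`
  have hexp (τ : K ≃ₐ[F] K) : ∃ n : ℕ, σ ^ n = τ :=
    mem_powers_iff_mem_zpowers.mpr (hgen τ)
  choose e he using hexp
  have hP (n : ℕ) : ∏ l ∈ Finset.range n, (σ ^ l) k ≠ 0 :=
    Finset.prod_ne_zero_iff.mpr fun l _ => (map_ne_zero _).mpr hk0
  let f : (K ≃ₐ[F] K) → Kˣ := fun τ => Units.mk0 _ (hP (e τ))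
  have hf : groupCohomology.IsMulCocycle₁ f := fun τ₁ τ₂ => by
    ext
    simp only [f, Units.val_mul, Units.val_mk0, AlgEquiv.smul_units_def, Units.coe_map,
      MonoidHom.coe_coe]
    rw [prod_range_pow_apply_eq_of_pow_eq horder hk (q := e τ₁ + e τ₂)
      (by rw [pow_add, he, he, he]), prod_range_pow_apply_add, he, mul_comm]
  obtain ⟨β, hβ⟩ := groupCohomology.isMulCoboundary₁_of_isMulCocycle₁_of_aut_to_units f hf
  refine ⟨β, β.ne_zero, ?_⟩
  have := congrArg Units.val (hβ σ)
  simp only [f, Units.val_div_eq_div_val, AlgEquiv.smul_units_def, Units.coe_map,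
    MonoidHom.coe_coe, Units.val_mk0] at this
  rw [this, prod_range_pow_apply_eq_of_pow_eq horder hk (q := 1) (by rw [he, pow_one])]
  simp

lemma exists_cycH_eq_cycG [FiniteDimensional F K]
    (hgen : ∀ τ : K ≃ₐ[F] K, τ ∈ Subgroup.zpowers σ) (horder : orderOf σ = m) {k : K}
    (hk0 : k ≠ 0) (hk : cycNorm m σ k = 1) :
    ∃ c : K, c ≠ 0 ∧ cycH m σ 1 k = cycG m σ c := by
  obtain ⟨c, hc, rfl⟩ := exists_div_self_eq_of_cycNorm_eq_one hgen horder hk0 hk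
  exact ⟨c, hc, cycH_one_div_self hc⟩

end Galois

namespace IsCycAut

variable {F K : Type*} [Field F] [Field K] [Algebra F K] {m : ℕ} {σ : K ≃ₐ[F] K} {a : K}
  {H : (Fin m → K) → (Fin m → K)} (hH : IsCycAut m σ a H)
include hH

lemma bijective : Function.Bijective H := hH.1

lemma map_add (u v : Fin m → K) : H (u + v) = H u + H v := hH.2.1 u v

lemma map_smul (r : F) (u : Fin m → K) : H (r • u) = r • H u := hH.2.2.1 r u

lemma map_cycOne : H (cycOne K m) = cycOne K m := hH.2.2.2.1

lemma map_cycMul (u v : Fin m → K) : H (cycMul m σ a u v) = cycMul m σ a (H u) (H v) :=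
  hH.2.2.2.2 u v

lemma map_zero : H 0 = 0 := _root_.map_zero (AddMonoidHom.mk' H hH.map_add)

lemma map_sum {ι : Type*} (s : Finset ι) (f : ι → Fin m → K) :
    H (∑ i ∈ s, f i) = ∑ i ∈ s, H (f i) :=
  _root_.map_sum (AddMonoidHom.mk' H hH.map_add) f s

lemma isLeftNuclear_apply_iff (z : Fin m → K) :
    IsLeftNuclear m σ a (H z) ↔ IsLeftNuclear m σ a z := by
  refine ⟨fun hz u v => hH.bijective.1 ?_, fun hz u v => ?_⟩
  · simpa only [hH.map_cycMul] using hz (H u) (H v)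
  · obtain ⟨u, rfl⟩ := hH.bijective.2 u
    obtain ⟨v, rfl⟩ := hH.bijective.2 v
    simpa only [hH.map_cycMul] using congrArg H (hz u v)

lemma exists_algEquiv (hm : 0 < m) (ha : ∀ i, 0 < i → i < m → (σ ^ i) a ≠ a) :
    ∃ τ : K ≃ₐ[F] K, ∀ x, H (cycMonomial m 0 x) = cycMonomial m 0 (τ x) := by
  have hnuc (z : Fin m → K) (hz : IsLeftNuclear m σ a z) : z = cycMonomial m 0 (z ⟨0, hm⟩) :=
    hz.eq_cycMonomial_zero hm ha
  have hK (x : K) :=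
    hnuc _ ((hH.isLeftNuclear_apply_iff _).2 (isLeftNuclear_cycMonomial_zero hm x))
  let φ : K →ₐ[F] K := AlgHom.mk'
    { toFun x := H (cycMonomial m 0 x) ⟨0, hm⟩
      map_one' := by rw [← cycOne_eq_cycMonomial, hH.map_cycOne]; rfl
      map_mul' x y := by
        have h := hH.map_cycMul (cycMonomial m 0 x) (cycMonomial m 0 y)
        rw [hK x, hK y] at h
        simp only [cycMul_cycMonomial_cycMonomial hm hm, if_pos hm] at h
        simpa using congrFun h ⟨0, hm⟩
      map_zero' := by simp [hH.map_zero]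
      map_add' x y := by simp only [cycMonomial_add, hH.map_add, Pi.add_apply] }
    fun r x => by simp [cycMonomial_smul, hH.map_smul]
  have hφ : Function.Surjective φ := fun y => by
    obtain ⟨z, hz⟩ := hH.bijective.2 (cycMonomial m 0 y)
    have hzK :=
      hnuc z ((hH.isLeftNuclear_apply_iff z).1 (hz ▸ isLeftNuclear_cycMonomial_zero hm y))
    refine ⟨z ⟨0, hm⟩, ?_⟩
    simp [φ, ← hzK, hz]
  exact ⟨AlgEquiv.ofBijective φ ⟨φ.injective, hφ⟩, hK⟩

lemma exists_apply_cycMonomial_one (hm : 1 < m) (horder : orderOf σ = m) {τ : K ≃ₐ[F] K}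
    (hcomm : Commute σ τ) (hτ : ∀ x, H (cycMonomial m 0 x) = cycMonomial m 0 (τ x)) :
    ∃ k : K, k ≠ 0 ∧ H (cycMonomial m 1 1) = cycMonomial m 1 k := by
  have hm0 : 0 < m := by omega
  set b := H (cycMonomial m 1 1)
  -- apply `H` to `t ∘ x = σ(x) ∘ t`
  have hb (x : K) (j : Fin m) : b j * (σ ^ (j : ℕ)) (τ x) = τ (σ x) * b j := by
    have hrel : cycMul m σ a (cycMonomial m 1 1) (cycMonomial m 0 x) =
        cycMul m σ a (cycMonomial m 0 (σ x)) (cycMonomial m 1 1) := by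
      rw [cycMul_cycMonomial_cycMonomial hm hm0, cycMul_cycMonomial_cycMonomial hm0 hm]
      simp
    have h := hH.map_cycMul (cycMonomial m 1 1) (cycMonomial m 0 x)
    rw [hrel, hH.map_cycMul, hτ, hτ, cycMul_cycMonomial_zero_left hm0,
      cycMul_cycMonomial_zero_right hm0] at h
    simpa using (congrFun h j).symm
  have hsupp (j : Fin m) (hj : (j : ℕ) ≠ 1) : b j = 0 := by
    by_contra hbj
    have hσj : σ ^ (j : ℕ) = σ ^ 1 := AlgEquiv.ext fun y => by
      obtain ⟨x, rfl⟩ := τ.surjective y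
      have hστ : τ (σ x) = σ (τ x) := DFunLike.congr_fun hcomm.eq.symm x
      rw [pow_one]
      exact mul_left_cancel₀ hbj ((hb x j).trans (by rw [hστ, mul_comm]))
    exact hj (pow_injOn_Iio_orderOf (by simp [horder]) (by simp [horder, hm]) hσj)
  refine ⟨b ⟨1, hm⟩, fun h0 => ?_, eq_cycMonomial_of_forall_ne hm hsupp⟩
  have hb0 : b = H 0 := by
    rw [hH.map_zero, eq_cycMonomial_of_forall_ne hm hsupp, h0, cycMonomial_zero]
  exact cycMonomial_ne_zero hm one_ne_zero (hH.bijective.1 hb0)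

lemma eq_cycH (hm : 1 < m) {τ : K ≃ₐ[F] K} {k : K}
    (hτ : ∀ x, H (cycMonomial m 0 x) = cycMonomial m 0 (τ x))
    (hk : H (cycMonomial m 1 1) = cycMonomial m 1 k) : H = cycH m σ τ k := by
  have hmono (n : ℕ) (hn : n < m) (x : K) :
      H (cycMonomial m n x) = cycH m σ τ k (cycMonomial m n x) := by
    induction n generalizing x with
    | zero => simp [hτ, cycH_cycMonomial]
    | succ n ih =>
      have hsplit : cycMonomial m (n + 1) x =
          cycMul m σ a (cycMonomial m n x) (cycMonomial m 1 1) := by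
        rw [cycMul_cycMonomial_cycMonomial (by omega) hm, if_pos hn]
        simp
      rw [cycH_cycMonomial, hsplit, hH.map_cycMul, ih (by omega), hk, cycH_cycMonomial,
        cycMul_cycMonomial_cycMonomial (by omega) hm, if_pos hn, Finset.prod_range_succ, mul_assoc]
  funext u
  conv_lhs => rw [← sum_cycMonomial u, hH.map_sum]
  simp only [hmono _ (Fin.isLt _), cycH_cycMonomial]
  exact sum_cycMonomial (cycH m σ τ k u)

theorem exists_eq_cycG [IsGalois F K] [FiniteDimensional F K] (hm : 1 < m)
    (hgen : ∀ τ : K ≃ₐ[F] K, τ ∈ Subgroup.zpowers σ) (horder : orderOf σ = m)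
    (ha0 : a ≠ 0) (hsub : ∀ L : Subfield K, a ∈ L → L = ⊤)
    (hroot : ∀ x : F, x ^ m = 1 → x = 1) : ∃ c : K, c ≠ 0 ∧ H = cycG m σ c := by
  obtain ⟨τ, hτ⟩ := hH.exists_algEquiv (by omega) fun _ => pow_apply_ne_self hsub horder
  have hcomm : Commute σ τ := by
    obtain ⟨j, rfl⟩ := Subgroup.mem_zpowers_iff.mp (hgen τ)
    exact (Commute.refl σ).zpow_right j
  obtain ⟨k, hk0, hk⟩ := hH.exists_apply_cycMonomial_one hm horder hcomm hτ
  have hHk := hH.eq_cycH hm hτ hk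
  have hτa : τ a = Algebra.norm F k • a := by
    rw [Algebra.smul_def, ← cycNorm_eq_algebraMap_norm hgen horder]
    exact apply_eq_cycNorm_mul_of_cycH_cycMul hm (hHk ▸ hH.map_cycMul)
  have hτm : τ ^ m = 1 := by
    rw [← horder, orderOf_eq_card_of_forall_mem_zpowers hgen]
    exact pow_card_eq_one'
  have hnorm := eq_one_of_apply_eq_smul hτm ha0 hroot hτa
  have hτ1 : τ = 1 := eq_one_of_apply_eq_self hsub (by rw [hτa, hnorm, one_smul])
  obtain ⟨c, hc, hcG⟩ := exists_cycH_eq_cycG hgen horder hk0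
    (by rw [cycNorm_eq_algebraMap_norm hgen horder, hnorm, map_one])
  exact ⟨c, hc, hHk.trans (hτ1 ▸ hcG)⟩

end IsCycAut

/-- Suppose `a ∈ K^×` lies in no proper subfield of `K` and `F` contains
no `m`-th root of unity other than `1`. Then `Aut_F(A) = {G_c : c ∈ K^×}`, this group is
isomorphic to `ker(N_{K/F})` (via `k ↦ H_{id,k}`), and every `F`-automorphism of
`A = (K/F,σ,a)` is inner. -/
theorem stmt3 {F K : Type*} [Field F] [Field K] [Algebra F K]
    (m : ℕ) (hm : 2 ≤ m) [IsGalois F K] [FiniteDimensional F K]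
    (hrank : Module.finrank F K = m)
    (σ : K ≃ₐ[F] K) (hgen : ∀ τ : K ≃ₐ[F] K, τ ∈ Subgroup.zpowers σ)
    (a : K) (ha0 : a ≠ 0)
    (hsub : ∀ L : Subfield K, a ∈ L → L = ⊤)
    (hroot : ∀ x : F, x ^ m = 1 → x = 1) :
    -- Aut_F(A) = {G_c : c ∈ K^×}
    (∀ H, IsCycAut m σ a H ↔ ∃ c : K, c ≠ 0 ∧ H = cycG m σ c) ∧
    -- all automorphisms are inner
    (∀ H, IsCycAut m σ a H → IsCycInner m σ a H) ∧
    -- `k ↦ H_{id,k}` is a multiplicative bijection from `ker N_{K/F}` onto `Aut_F(A)`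
    (∀ k : K, k ≠ 0 → cycNorm m σ k = 1 → ∃ c : K, c ≠ 0 ∧ cycH m σ 1 k = cycG m σ c) ∧
    (∀ c : K, c ≠ 0 → ∃ k : K, k ≠ 0 ∧ cycNorm m σ k = 1 ∧ cycH m σ 1 k = cycG m σ c) ∧
    (∀ k k' : K, k ≠ 0 → k' ≠ 0 → cycNorm m σ k = 1 → cycNorm m σ k' = 1 →
      cycH m σ 1 k = cycH m σ 1 k' → k = k') ∧
    (∀ k k' : K, k ≠ 0 → k' ≠ 0 → cycNorm m σ k = 1 → cycNorm m σ k' = 1 →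
      cycH m σ 1 (k * k') = cycH m σ 1 k ∘ cycH m σ 1 k') := by
  have horder : orderOf σ = m := by
    rw [orderOf_eq_card_of_forall_mem_zpowers hgen, IsGalois.card_aut_eq_finrank, hrank]
  have hσm : σ ^ m = 1 := horder ▸ pow_orderOf_eq_one σ
  have hAut (H : (Fin m → K) → (Fin m → K)) :
      IsCycAut m σ a H ↔ ∃ c : K, c ≠ 0 ∧ H = cycG m σ c :=
    ⟨fun hH => hH.exists_eq_cycG hm hgen horder ha0 hsub hroot,
      by rintro ⟨c, hc, rfl⟩; exact isCycAut_cycG hσm hc⟩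
  refine ⟨hAut, fun H hH => ?_, fun k hk0 hk => exists_cycH_eq_cycG hgen horder hk0 hk,
    fun c hc => ⟨σ c / c, ?_, cycNorm_div_self hσm hc, cycH_one_div_self hc⟩,
    fun k k' _ _ _ _ h => cycH_one_injective hm h, fun k k' _ _ _ _ => cycH_one_mul k k'⟩
  · obtain ⟨c, hc, rfl⟩ := (hAut H).1 hH
    exact isCycInner_cycG (by omega) hc
  · exact div_ne_zero ((map_ne_zero σ).mpr hc) hc
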